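/- arXiv:1808.09662 — 2 statements merged into one kernel-verified Lean document; each statement's English description precedes it below -/
import Mathlib

section
/- Let k be the field with two elements and R' = k[X1,X2,X3]. For 1 ≤ i < j ≤ 3, let R''_{ij} be the subring of the localization of R' at (X1+X2)(X1+X3)(X2+X3) obtained by inverting the two elements X_i+X_k and X_j+X_k (where k is the remaining index), but not X_i+X_j. Then R' equals the intersection R''_{12} ∩ R''_{13} ∩ R''_{23} inside the full localization. -/
/-!
An element of all three rings can be written as `f / ((X₁+X₃)(X₂+X₃))ⁿ`. Comparing with its
expression in `R''₁₃`, where `X₁+X₃` is not inverted, shows that the prime `X₁+X₃` occurs in `f`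
to order at least `n`; symmetrically, comparing with `R''₂₃` does the same for `X₂+X₃`. Hence the
denominator divides `f`. The sums `Xᵢ+Xⱼ` are prime because a linear change of variables maps
`Xᵢ` to them.
-/

noncomputable section
open MvPolynomial

abbrev Rp : Type := MvPolynomial (Fin 3) (ZMod 2)
abbrev K : Type := FractionRing Rp

def xk (i : Fin 3) : K := algebraMap Rp K (X i)

namespace MvPolynomial

variable {σ R : Type*} [CommRing R]

def shearEquiv [DecidableEq σ] {i j : σ} (hij : i ≠ j) :
    MvPolynomial σ R ≃ₐ[R] MvPolynomial σ R := by
  refine AlgEquiv.ofAlgHom (aeval (Function.update X i (X i + X j)))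
    (aeval (Function.update X i (X i - X j))) ?_ ?_ <;>
  · ext l : 1
    by_cases hl : l = i
    · subst hl
      simp [Function.update_of_ne hij.symm]
    · simp [Function.update_of_ne hl]

theorem shearEquiv_X [DecidableEq σ] {i j : σ} (hij : i ≠ j) :
    shearEquiv (R := R) hij (X i) = X i + X j := by
  simp [shearEquiv]

theorem prime_X_add_X [IsCancelMulZero R] [Nontrivial R] {i j : σ} (hij : i ≠ j) :
    Prime (X i + X j : MvPolynomial σ R) := by
  classical
  rw [← shearEquiv_X hij]
  exact (MulEquiv.prime_iff (shearEquiv hij).toMulEquiv).mpr X_prime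

end MvPolynomial

section AwaySubring

variable {R L : Type*} [CommRing R] [Field L] [Algebra R L]

/-- The image of `R[1/a]` in `L`. -/
def awaySubring (a : R) : Subring L where
  carrier := {x | ∃ (n : ℕ) (f : R), x * algebraMap R L a ^ n = algebraMap R L f}
  one_mem' := ⟨0, 1, by simp⟩
  zero_mem' := ⟨0, 0, by simp⟩
  add_mem' := by
    rintro x y ⟨n, f, hf⟩ ⟨m, g, hg⟩
    refine ⟨n + m, f * a ^ m + g * a ^ n, ?_⟩
    simp only [map_add, map_mul, map_pow, ← hf, ← hg]
    ring
  neg_mem' := by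
    rintro x ⟨n, f, hf⟩
    exact ⟨n, -f, by rw [map_neg, ← hf, neg_mul]⟩
  mul_mem' := by
    rintro x y ⟨n, f, hf⟩ ⟨m, g, hg⟩
    refine ⟨n + m, f * g, ?_⟩
    rw [map_mul, ← hf, ← hg]
    ring

theorem closure_range_union_inv_le_awaySubring (a b : R) :
    Subring.closure (Set.range (algebraMap R L) ∪ {(algebraMap R L a)⁻¹, (algebraMap R L b)⁻¹}) ≤
      awaySubring (a * b) := by
  -- `y⁻¹ * y * y = y` holds also for `y = 0`, so the inverses need no nonvanishing hypothesis.
  have inv_mul_mul_sq (y z : L) : y⁻¹ * (y * z) ^ 2 = y * z ^ 2 := by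
    rw [mul_pow, sq y, ← mul_assoc, ← mul_assoc, inv_mul_mul_self]
  rw [Subring.closure_le]
  rintro x (⟨f, rfl⟩ | rfl | rfl)
  · exact ⟨0, f, by simp⟩
  · exact ⟨2, a * b ^ 2, by rw [map_mul, inv_mul_mul_sq, map_mul, map_pow]⟩
  · exact ⟨2, b * a ^ 2, by rw [mul_comm a b, map_mul, inv_mul_mul_sq, map_mul, map_pow]⟩

theorem range_le_closure_range_union (s : Set L) :
    (algebraMap R L).range ≤ Subring.closure (Set.range (algebraMap R L) ∪ s) := by
  rintro _ ⟨f, rfl⟩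
  exact Subring.subset_closure (Or.inl ⟨f, rfl⟩)

variable [IsDomain R] [FaithfulSMul R L]

theorem pow_dvd_of_mem_awaySubring {p c b f : R} {x : L} {n : ℕ} (hp : Prime p)
    (hpb : ¬ p ∣ b) (hf : x * algebraMap R L (p * c) ^ n = algebraMap R L f)
    (hx : x ∈ awaySubring b) : p ^ n ∣ f := by
  obtain ⟨m, g, hg⟩ := hx
  have hfg : f * b ^ m = g * (p * c) ^ n := by
    apply FaithfulSMul.algebraMap_injective R L
    simp only [map_mul, map_pow, ← hf, ← hg]
    ring
  refine hp.pow_dvd_of_dvd_mul_right n (fun h : p ∣ b ^ m => hpb (hp.dvd_of_dvd_pow h)) ?_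
  rw [hfg, mul_pow]
  exact ⟨g * c ^ n, by ring⟩

theorem awaySubring_inf_inf_le_range {p q r : R} (hq : Prime q) (hr : Prime r)
    (hqp : ¬ q ∣ p) (hqr : ¬ q ∣ r) (hrp : ¬ r ∣ p) (hrq : ¬ r ∣ q) :
    awaySubring (q * r) ⊓ awaySubring (p * r) ⊓ awaySubring (p * q) ≤ (algebraMap R L).range := by
  rintro x ⟨⟨⟨n, f, hf⟩, hpr⟩, hpq⟩
  have hqf : q ^ n ∣ f := pow_dvd_of_mem_awaySubring hq (hq.not_dvd_mul hqp hqr) hf hpr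
  have hrf : r ^ n ∣ f :=
    pow_dvd_of_mem_awaySubring hr (hr.not_dvd_mul hrp hrq) (by rwa [mul_comm r q]) hpq
  obtain ⟨f', rfl⟩ := hqf
  obtain ⟨g, rfl⟩ := hr.pow_dvd_of_dvd_mul_left n (fun h => hrq (hr.dvd_of_dvd_pow h)) hrf
  have hqr0 : algebraMap R L (q * r) ^ n ≠ 0 :=
    pow_ne_zero n ((map_ne_zero_iff _ (FaithfulSMul.algebraMap_injective R L)).mpr
      (mul_ne_zero hq.ne_zero hr.ne_zero))
  refine ⟨g, mul_right_cancel₀ hqr0 ?_⟩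
  rw [hf, ← map_pow, ← map_mul, mul_pow]
  congr 1
  ring

theorem closure_inf_closure_inf_closure_eq_range {p q r : R} (hq : Prime q) (hr : Prime r)
    (hqp : ¬ q ∣ p) (hqr : ¬ q ∣ r) (hrp : ¬ r ∣ p) (hrq : ¬ r ∣ q) :
    Subring.closure (Set.range (algebraMap R L) ∪ {(algebraMap R L q)⁻¹, (algebraMap R L r)⁻¹}) ⊓
      Subring.closure (Set.range (algebraMap R L) ∪ {(algebraMap R L p)⁻¹, (algebraMap R L r)⁻¹}) ⊓
      Subring.closure (Set.range (algebraMap R L) ∪ {(algebraMap R L p)⁻¹, (algebraMap R L q)⁻¹}) =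
      (algebraMap R L).range := by
  refine le_antisymm ?_ (le_inf (le_inf (range_le_closure_range_union _)
    (range_le_closure_range_union _)) (range_le_closure_range_union _))
  calc _ ≤ awaySubring (q * r) ⊓ awaySubring (p * r) ⊓ awaySubring (p * q) := by
        gcongr <;> exact closure_range_union_inv_le_awaySubring _ _
    _ ≤ _ := awaySubring_inf_inf_le_range hq hr hqp hqr hrp hrq

end AwaySubring

/-- `R' = R''₁₂ ∩ R''₁₃ ∩ R''₂₃` inside the localization: the subring `R''_{ij}` is
generated by (the image of) `R'` together with the inverses of the two sums `X_l + X_m`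
other than `X_i + X_j`. -/
theorem stmt0 :
    (Subring.closure (Set.range (algebraMap Rp K) ∪ {(xk 0 + xk 2)⁻¹, (xk 1 + xk 2)⁻¹})) ⊓
    (Subring.closure (Set.range (algebraMap Rp K) ∪ {(xk 0 + xk 1)⁻¹, (xk 2 + xk 1)⁻¹})) ⊓
    (Subring.closure (Set.range (algebraMap Rp K) ∪ {(xk 1 + xk 0)⁻¹, (xk 2 + xk 0)⁻¹})) =
    (algebraMap Rp K).range := by
  have xk_add_xk (i j : Fin 3) : xk i + xk j = algebraMap Rp K (X i + X j) := (map_add _ _ _).symm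
  have not_dvd {a b : Rp} (v : Fin 3 → ZMod 2) (ha : eval v a = 0) (hb : eval v b ≠ 0) :
      ¬ a ∣ b :=
    fun h => hb (zero_dvd_iff.mp (ha ▸ map_dvd (eval v) h))
  rw [add_comm (xk 2) (xk 1), add_comm (xk 1) (xk 0), add_comm (xk 2) (xk 0)]
  simp only [xk_add_xk]
  exact closure_inf_closure_inf_closure_eq_range (p := X 0 + X 1)
    (prime_X_add_X (by decide)) (prime_X_add_X (by decide))
    (not_dvd ![0, 1, 0] (by simp) (by simp)) (not_dvd ![0, 1, 0] (by simp) (by simp))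
    (not_dvd ![1, 0, 0] (by simp) (by simp)) (not_dvd ![1, 0, 0] (by simp) (by simp))
end
end

section
/- Let R'' = F_2[X1,X2,X3][(X1+X2)^{-1},(X1+X3)^{-1},(X2+X3)^{-1}] and let R̃'' be the analogous ring in square-root variables, i.e. F_2[Y1,Y2,Y3][(Y1+Y2)^{-1},(Y1+Y3)^{-1},(Y2+Y3)^{-1}] with X_i = Y_i^2. Then R̃'' is a free R''-module of rank 8 with basis {Y1^{ε1} Y2^{ε2} Y3^{ε3} : ε_i ∈ {0,1}}. -/
/-! In characteristic `2` squaring is a ring endomorphism, and it maps the generators of `R̃''`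
onto those of `R''` since `(Y_i + Y_j)² = X_i + X_j`. Hence `R''` is the image of `R̃''` under
squaring: it lies in `R̃''` and consists of squares.

The monomials `Y^ε` span `R̃''` over `R''`: their span is closed under multiplication because
`Y_i² ∈ R''`, and it contains `Y_i` and `(Y_i + Y_j)⁻¹ = (X_i + X_j)⁻¹ (Y_i + Y_j)`.
They are independent even over the squares of `F₂(Y₁, Y₂, Y₃)`: after clearing denominators, the
coefficient of `Y^(2w + ε)` in `∑ f_δ² Y^δ` is the coefficient of `Y^w` in `f_ε`. -/

noncomputable section
open MvPolynomial

abbrev RY : Type := MvPolynomial (Fin 3) (ZMod 2)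
abbrev L : Type := FractionRing RY

/-- The square-root variable `Y_i`. -/
def y (i : Fin 3) : L := algebraMap RY L (X i)

/-- `R̃'' = F₂[Y1,Y2,Y3][(Y1+Y2)⁻¹,(Y1+Y3)⁻¹,(Y2+Y3)⁻¹]`. -/
def Rtilde : Subalgebra (ZMod 2) L :=
  Algebra.adjoin (ZMod 2)
    ({y 0, y 1, y 2} ∪ {(y 0 + y 1)⁻¹, (y 0 + y 2)⁻¹, (y 1 + y 2)⁻¹})

/-- `R'' = F₂[X1,X2,X3][(X1+X2)⁻¹,(X1+X3)⁻¹,(X2+X3)⁻¹]` with `X_i = Y_i²`. -/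
def Rsq : Subalgebra (ZMod 2) L :=
  Algebra.adjoin (ZMod 2)
    ({y 0 ^ 2, y 1 ^ 2, y 2 ^ 2} ∪
      {(y 0 ^ 2 + y 1 ^ 2)⁻¹, (y 0 ^ 2 + y 2 ^ 2)⁻¹, (y 1 ^ 2 + y 2 ^ 2)⁻¹})

section
variable {σ : Type*} [Fintype σ]

lemma prod_X_pow_val_eq_monomial (ε : σ → Fin 2) :
    ∏ i, (X i : MvPolynomial σ (ZMod 2)) ^ (ε i : ℕ)
      = monomial (Finsupp.equivFunOnFinite.symm fun i => (ε i : ℕ)) 1 := by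
  rw [monomial_eq, C_1, one_mul, Finsupp.prod_fintype _ _ (by simp)]
  rfl

-- Only the `δ = ε` term has a nonzero coefficient at `2 • w + ε`: for `δ ≠ ε` the remaining
-- exponent of `p δ ^ 2` is odd in a coordinate where `δ` and `ε` differ.
theorem eq_zero_of_sum_sq_mul_prod_X_pow_eq_zero [DecidableEq σ]
    (p : (σ → Fin 2) → MvPolynomial σ (ZMod 2))
    (h : ∑ δ, p δ ^ 2 * ∏ i, X i ^ (δ i : ℕ) = 0) (ε : σ → Fin 2) : p ε = 0 := by
  ext w
  have hw := congrArg (coeff (2 • w + Finsupp.equivFunOnFinite.symm fun i => (ε i : ℕ))) h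
  simp only [prod_X_pow_val_eq_monomial, ← expand_zmod, coeff_sum, coeff_zero,
    coeff_mul_monomial', mul_one] at hw
  rwa [Finset.sum_eq_single ε, if_pos le_add_self, add_tsub_cancel_right,
    coeff_expand_smul 2 two_ne_zero, ← coeff_zero w] at hw
  · intro δ _ hδε
    obtain ⟨i, hi⟩ := Function.ne_iff.mp hδε
    refine ite_eq_right_iff.mpr fun hle => coeff_expand_of_not_dvd (p δ) (i := i) ?_
    have hle_i := hle i
    have hne := Fin.val_ne_of_ne hi
    simp only [Finsupp.tsub_apply, Finsupp.add_apply, Finsupp.smul_apply,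
      Finsupp.coe_equivFunOnFinite_symm, smul_eq_mul] at hle_i ⊢
    omega
  · simp

theorem eq_zero_of_sum_sq_mul_prod_pow_eq_zero [DecidableEq σ] {K : Type*} [Field K]
    [Algebra (MvPolynomial σ (ZMod 2)) K] [IsFractionRing (MvPolynomial σ (ZMod 2)) K]
    (f : (σ → Fin 2) → K)
    (h : ∑ δ, f δ ^ 2 * ∏ i, algebraMap (MvPolynomial σ (ZMod 2)) K (X i) ^ (δ i : ℕ) = 0)
    (ε : σ → Fin 2) : f ε = 0 := by
  obtain ⟨b, hb⟩ := IsLocalization.exist_integer_multiples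
    (nonZeroDivisors (MvPolynomial σ (ZMod 2))) Finset.univ f
  choose p hp using fun δ => hb δ (Finset.mem_univ δ)
  have hb0 : algebraMap _ K (b : MvPolynomial σ (ZMod 2)) ≠ 0 :=
    IsFractionRing.to_map_ne_zero_of_mem_nonZeroDivisors b.2
  have hpoly : ∑ δ, p δ ^ 2 * ∏ i, X i ^ (δ i : ℕ) = 0 := by
    apply IsFractionRing.injective (MvPolynomial σ (ZMod 2)) K
    simp only [map_sum, map_mul, map_pow, map_prod, hp, Algebra.smul_def, mul_pow, mul_assoc,
      ← Finset.mul_sum, h, mul_zero, map_zero]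
  have hpε := congrArg (algebraMap _ K) (eq_zero_of_sum_sq_mul_prod_X_pow_eq_zero p hpoly ε)
  rw [hp, Algebra.smul_def, map_zero] at hpε
  exact (mul_eq_zero.mp hpε).resolve_left hb0

end

open FiniteField

instance : CharP L 2 := charP_of_injective_algebraMap (IsFractionRing.injective RY L) 2

lemma frobeniusAlgHom_apply_eq_sq (x : L) : frobeniusAlgHom (ZMod 2) L x = x ^ 2 := by
  simp [ZMod.card]

lemma Rsq_eq_map_frobeniusAlgHom : Rsq = Rtilde.map (frobeniusAlgHom (ZMod 2) L) := by
  simp only [Rsq, Rtilde, AlgHom.map_adjoin, Set.image_union, Set.image_insert_eq,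
    Set.image_singleton, frobeniusAlgHom_apply_eq_sq, inv_pow, CharTwo.add_sq]

lemma Rsq_le_Rtilde : Rsq ≤ Rtilde := by
  rw [Rsq_eq_map_frobeniusAlgHom, Subalgebra.map_le]
  intro x hx
  simpa [frobeniusAlgHom_apply_eq_sq] using pow_mem hx 2

lemma exists_sq_eq_of_mem_Rsq {z : L} (hz : z ∈ Rsq) : ∃ w : L, w ^ 2 = z := by
  rw [Rsq_eq_map_frobeniusAlgHom] at hz
  obtain ⟨w, -, rfl⟩ := hz
  exact ⟨w, (frobeniusAlgHom_apply_eq_sq w).symm⟩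

lemma y_add_y_ne_zero {i j : Fin 3} (h : i ≠ j) : y i + y j ≠ 0 := by
  rw [Ne, CharTwo.add_eq_zero, y, y, (IsFractionRing.injective RY L).eq_iff]
  exact fun hX => h (X_injective hX)

lemma y_mem_Rtilde (i : Fin 3) : y i ∈ Rtilde :=
  Algebra.subset_adjoin (by fin_cases i <;> simp)

lemma sq_y_mem_Rsq (i : Fin 3) : y i ^ 2 ∈ Rsq :=
  Algebra.subset_adjoin (by fin_cases i <;> simp)

lemma pow_val_mul_pow_val {M : Type*} [Monoid M] (x : M) (a b : Fin 2) :
    x ^ (a : ℕ) * x ^ (b : ℕ) = (x ^ 2) ^ (min a b : ℕ) * x ^ ((a + b : Fin 2) : ℕ) := by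
  rw [← pow_mul, ← pow_add, ← pow_add]
  congr 1
  revert a b
  decide

def monomialSpan : Submodule Rsq L :=
  Submodule.span Rsq (Set.range fun ε : Fin 3 → Fin 2 => ∏ i, y i ^ (ε i : ℕ))

lemma prod_pow_mem_monomialSpan (ε : Fin 3 → Fin 2) :
    ∏ i, y i ^ (ε i : ℕ) ∈ monomialSpan :=
  Submodule.subset_span ⟨ε, rfl⟩

lemma y_mem_monomialSpan (i : Fin 3) : y i ∈ monomialSpan := by
  simpa [Pi.single_apply, apply_ite Fin.val, pow_ite] using
    prod_pow_mem_monomialSpan (Pi.single i 1)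

lemma one_mem_monomialSpan : (1 : L) ∈ monomialSpan := by
  simpa using prod_pow_mem_monomialSpan 0

lemma mul_mem_monomialSpan {a b : L} (ha : a ∈ monomialSpan) (hb : b ∈ monomialSpan) :
    a * b ∈ monomialSpan := by
  suffices hle : monomialSpan * monomialSpan ≤ monomialSpan from
    hle (Submodule.mul_mem_mul ha hb)
  rw [monomialSpan, Submodule.span_mul_span, Submodule.span_le]
  rintro _ ⟨_, ⟨ε, rfl⟩, _, ⟨δ, rfl⟩, rfl⟩
  have hsq : ∏ i, (y i ^ 2) ^ (min (ε i) (δ i) : ℕ) ∈ Rsq :=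
    prod_mem fun i _ => pow_mem (sq_y_mem_Rsq i) _
  have hprod : (∏ i, y i ^ (ε i : ℕ)) * ∏ i, y i ^ (δ i : ℕ)
      = (⟨_, hsq⟩ : Rsq) • ∏ i, y i ^ ((ε + δ) i : ℕ) := by
    simp only [Subalgebra.smul_def, smul_eq_mul, ← Finset.prod_mul_distrib, pow_val_mul_pow_val,
      Pi.add_apply]
  dsimp only
  rw [hprod]
  exact Submodule.smul_mem _ _ (prod_pow_mem_monomialSpan _)

-- `(Y_i + Y_j)⁻¹ = (X_i + X_j)⁻¹ (Y_i + Y_j)` with `X_i = Y_i²`.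
lemma inv_y_add_y_mem_monomialSpan {i j : Fin 3} (hij : i ≠ j)
    (hX : (y i ^ 2 + y j ^ 2)⁻¹ ∈ Rsq) : (y i + y j)⁻¹ ∈ monomialSpan := by
  have hinv : (y i + y j)⁻¹ = (y i ^ 2 + y j ^ 2)⁻¹ * (y i + y j) := by
    rw [← CharTwo.add_sq, sq, mul_inv, mul_assoc,
      inv_mul_cancel₀ (y_add_y_ne_zero hij), mul_one]
  rw [hinv]
  exact Submodule.smul_mem _ (⟨_, hX⟩ : Rsq)
    (add_mem (y_mem_monomialSpan i) (y_mem_monomialSpan j))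

lemma Rtilde_subset_monomialSpan : (Rtilde : Set L) ⊆ monomialSpan := by
  let S := (monomialSpan.restrictScalars (ZMod 2)).toSubalgebra one_mem_monomialSpan
    fun _ _ => mul_mem_monomialSpan
  suffices Rtilde ≤ S from this
  refine Algebra.adjoin_le ?_
  rintro _ (⟨rfl | rfl | rfl⟩ | ⟨rfl | rfl | rfl⟩)
  exacts [y_mem_monomialSpan 0, y_mem_monomialSpan 1, y_mem_monomialSpan 2,
    inv_y_add_y_mem_monomialSpan (by decide) (Algebra.subset_adjoin (by simp)),
    inv_y_add_y_mem_monomialSpan (by decide) (Algebra.subset_adjoin (by simp)),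
    inv_y_add_y_mem_monomialSpan (by decide) (Algebra.subset_adjoin (by simp))]

lemma linearIndependent_prod_pow :
    LinearIndependent Rsq fun ε : Fin 3 → Fin 2 => ∏ i, y i ^ (ε i : ℕ) := by
  refine Fintype.linearIndependent_iff.mpr fun c hc ε => ?_
  choose w hw using fun δ => exists_sq_eq_of_mem_Rsq (c δ).2
  have hsum : ∑ δ, w δ ^ 2 * ∏ i, y i ^ (δ i : ℕ) = 0 := by
    simpa only [hw, Subalgebra.smul_def, smul_eq_mul] using hc
  rw [← ZeroMemClass.coe_eq_zero, ← hw ε, eq_zero_of_sum_sq_mul_prod_pow_eq_zero w hsum ε,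
    zero_pow two_ne_zero]

/-- `R̃''` is a free `R''`-module of rank `8` with basis
`{Y1^{ε1} Y2^{ε2} Y3^{ε3} : ε_i ∈ {0,1}}`: one has `R'' ⊆ R̃''`, the eight monomials
lie in `R̃''`, and every element of `R̃''` is uniquely an `R''`-linear combination
of them. -/
theorem stmt13 :
    Rsq ≤ Rtilde ∧
    (∀ ε : Fin 3 → Fin 2, (∏ i, y i ^ (ε i : ℕ)) ∈ Rtilde) ∧
    ∀ z ∈ Rtilde, ∃! c : (Fin 3 → Fin 2) → Rsq,
      z = ∑ ε : Fin 3 → Fin 2, (c ε : L) * ∏ i, y i ^ (ε i : ℕ) := by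
  refine ⟨Rsq_le_Rtilde, fun ε => prod_mem fun i _ => pow_mem (y_mem_Rtilde i) _,
    fun z hz => ?_⟩
  obtain ⟨c, rfl⟩ :=
    (Submodule.mem_span_range_iff_exists_fun Rsq).mp (Rtilde_subset_monomialSpan hz)
  exact ⟨c, rfl, fun c' hc' =>
    funext (Fintype.linearIndependent_iffₛ.mp linearIndependent_prod_pow c' c hc'.symm)⟩
end
end
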